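/- Let O ⊆ X be the set of elements of the form ω + Σ_{v∈P} Σ_{j∈ℤ/f_vℤ} Σ_{i=1}^{m} a^j_{v,i}·ε^j_{v,i} with every a^j_{v,i} ∈ {−1, 0} (the Weyl orbit of the minuscule cocharacter ω), and let λ₀ := ω − Σ_{v∈P} ( ⌈f_v/2⌉ · Σ_{1≤i≤m, i odd} ε^{0}_{v,i} + ⌊f_v/2⌋ · Σ_{1≤i≤m, i even} ε^{0}_{v,i} ). Then the number of elements λ ∈ O with λ − λ₀ ∈ (1 − σ)(X) equals ∏_{v∈P} (f_v choose ⌊f_v/2⌋)^m. -/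

import Mathlib

open Finset

/-- Index set for the basis of the cocharacter lattice `X`: `none` is `ω`,
`some ⟨v, (j, i)⟩` is `ε^j_{v,i}` (with `i : Fin m` encoding the index `i+1 ∈ {1,…,m}`). -/
abbrev XIdx (P : Type) (f : P → ℕ) (m : ℕ) := Option ((v : P) × (ZMod (f v) × Fin m))

/-- The free `ℤ`-module `X` with basis `ω, ε^j_{v,i}`. -/
abbrev XZ (P : Type) (f : P → ℕ) (m : ℕ) := XIdx P f m →₀ ℤ

/-- The index shift underlying `σ`: `σ(ω) = ω`, `σ(ε^j_{v,i}) = ε^{j+1}_{v,i}`. -/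
def xShift (P : Type) (f : P → ℕ) (m : ℕ) : XIdx P f m → XIdx P f m
  | none => none
  | some ⟨v, (j, i)⟩ => some ⟨v, (j + 1, i)⟩

/-- The automorphism `σ` of `X`. -/
noncomputable def sigmaZ (P : Type) (f : P → ℕ) (m : ℕ) : Module.End ℤ (XZ P f m) :=
  Finsupp.lmapDomain ℤ ℤ (xShift P f m)

/-- The Weyl orbit `O` of the minuscule cocharacter `ω`: elements
`ω + Σ a^j_{v,i} ε^j_{v,i}` with all `a^j_{v,i} ∈ {−1, 0}`. -/
def weylOrbit (P : Type) (f : P → ℕ) (m : ℕ) : Set (XZ P f m) :=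
  {x | x none = 1 ∧
    ∀ t : (v : P) × (ZMod (f v) × Fin m), x (some t) = -1 ∨ x (some t) = 0}

/-- `λ₀ = ω − Σ_v (⌈f_v/2⌉·Σ_{i odd} ε^0_{v,i} + ⌊f_v/2⌋·Σ_{i even} ε^0_{v,i})`. -/
noncomputable def lamZeroZ (P : Type) [Fintype P] (f : P → ℕ) [∀ v, NeZero (f v)] (m : ℕ) :
    XZ P f m :=
  Finsupp.single none 1 -
    ∑ v : P,
      ((((f v + 1) / 2 : ℕ) : ℤ) •
          ∑ i ∈ univ.filter (fun i : Fin m => Odd ((i : ℕ) + 1)),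
            Finsupp.single (some ⟨v, ((0 : ZMod (f v)), i)⟩) (1 : ℤ) +
        (((f v / 2 : ℕ) : ℤ) •
          ∑ i ∈ univ.filter (fun i : Fin m => Even ((i : ℕ) + 1)),
            Finsupp.single (some ⟨v, ((0 : ZMod (f v)), i)⟩) (1 : ℤ)))

/-!
Since `σ` permutes the basis, with `ω` fixed and the `ε^j_{v,i}` (for fixed `v, i`) forming a
cycle of length `f_v`, the image `(1 - σ)X` consists exactly of the vectors with vanishing
`ω`-coordinate and vanishing coordinate sum along each cycle. An element of `O` is
`ω - Σ_{j ∈ s_{v,i}} ε^j_{v,i}` for a family of subsets `s_{v,i} ⊆ ℤ/f_v`, and its cycle sums are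
`-#s_{v,i}`, while those of `λ₀` are `-⌈f_v/2⌉` or `-⌊f_v/2⌋`. So the count is
`∏_{v,i} (f_v choose ⌈f_v/2⌉ or ⌊f_v/2⌋)`, and the two binomial coefficients agree.
-/

theorem ZMod.sum_range_natCast {M : Type*} [AddCommMonoid M] (n : ℕ) [NeZero n] (y : ZMod n → M) :
    ∑ r ∈ range n, y r = ∑ j, y j :=
  sum_nbij' Nat.cast ZMod.val (fun _ _ => mem_univ _)
    (fun j _ => mem_range.2 (ZMod.val_lt j))
    (fun _ hr => ZMod.val_cast_of_lt (mem_range.1 hr)) (fun j _ => ZMod.natCast_zmod_val j)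
    (fun _ _ => rfl)

theorem ZMod.exists_sub_sub_one_eq_iff_sum_eq_zero {G : Type*} [AddCommGroup G] {n : ℕ}
    [NeZero n] (y : ZMod n → G) :
    (∃ x : ZMod n → G, ∀ j, x j - x (j - 1) = y j) ↔ ∑ j, y j = 0 := by
  constructor
  · rintro ⟨x, hx⟩
    simp_rw [← hx, sum_sub_distrib]
    rw [sub_eq_zero]
    exact (Fintype.sum_equiv (Equiv.subRight 1) _ _ fun _ => rfl).symm
  · intro hy
    -- partial sums; wrapping around from `j = 0` to `j = -1` costs `∑ j, y j = 0`
    refine ⟨fun j => ∑ r ∈ range (j.val + 1), y r, fun j => ?_⟩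
    obtain ⟨a, ha, rfl⟩ : ∃ a < n, ((a + 1 : ℕ) : ZMod n) = j :=
      ⟨(j - 1).val, ZMod.val_lt _, by simp⟩
    have hprev : ((a + 1 : ℕ) : ZMod n) - 1 = a := by push_cast; ring
    simp only [hprev, ZMod.val_cast_of_lt ha]
    obtain hlt | heq : a + 1 < n ∨ a + 1 = n := by omega
    · rw [ZMod.val_cast_of_lt hlt, sum_range_succ, add_sub_cancel_left]
    · rw [heq, ZMod.natCast_self, ZMod.val_zero, ZMod.sum_range_natCast, hy]
      simp

theorem Nat.choose_add_one_div_two (n : ℕ) : n.choose ((n + 1) / 2) = n.choose (n / 2) := by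
  rw [← Nat.choose_symm (Nat.div_le_self n 2)]
  congr 1
  omega

section

variable {P : Type} {f : P → ℕ} {m : ℕ}

theorem xShift_injective : Function.Injective (xShift P f m) := by
  rintro (_ | ⟨v, j, i⟩) (_ | ⟨v', j', i'⟩) h <;> simp [xShift] at h ⊢
  obtain ⟨rfl, h⟩ := h
  simpa using h

theorem sigmaZ_apply_none (x : XZ P f m) : sigmaZ P f m x none = x none :=
  Finsupp.mapDomain_apply xShift_injective x none

theorem sigmaZ_apply_some (x : XZ P f m) (v : P) (j : ZMod (f v)) (i : Fin m) :
    sigmaZ P f m x (some ⟨v, (j, i)⟩) = x (some ⟨v, (j - 1, i)⟩) := by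
  simpa [sigmaZ, xShift] using Finsupp.mapDomain_apply xShift_injective x (some ⟨v, (j - 1, i)⟩)

variable [∀ v, NeZero (f v)]

noncomputable def orbitSum (v : P) (i : Fin m) : XZ P f m →ₗ[ℤ] ℤ :=
  ∑ j : ZMod (f v), Finsupp.lapply (some ⟨v, (j, i)⟩)

theorem orbitSum_apply (v : P) (i : Fin m) (x : XZ P f m) :
    orbitSum v i x = ∑ j : ZMod (f v), x (some ⟨v, (j, i)⟩) := by
  simp [orbitSum]

open Classical in
theorem orbitSum_single_zero (v w : P) (i k : Fin m) :
    orbitSum v i (Finsupp.single (some ⟨w, (0, k)⟩) 1 : XZ P f m) =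
      if w = v ∧ k = i then 1 else 0 := by
  rw [orbitSum_apply]
  split_ifs with h
  · obtain ⟨rfl, rfl⟩ := h
    simp [Finsupp.single_apply, eq_comm]
  · refine sum_eq_zero fun j _ => Finsupp.single_eq_of_ne fun heq => h ?_
    cases heq
    exact ⟨rfl, rfl⟩

variable [Fintype P]

theorem mem_range_one_sub_sigmaZ_iff (y : XZ P f m) :
    y ∈ LinearMap.range (1 - sigmaZ P f m) ↔ y none = 0 ∧ ∀ v i, orbitSum v i y = 0 := by
  simp only [orbitSum_apply, ← ZMod.exists_sub_sub_one_eq_iff_sum_eq_zero]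
  constructor
  · rintro ⟨x, rfl⟩
    refine ⟨by simp [sigmaZ_apply_none], fun v i => ⟨fun j => x (some ⟨v, (j, i)⟩), fun j => ?_⟩⟩
    simp [sigmaZ_apply_some]
  · rintro ⟨hnone, hsome⟩
    choose x hx using hsome
    refine ⟨Finsupp.equivFunOnFinite.symm fun | none => 0 | some ⟨v, (j, i)⟩ => x v i j, ?_⟩
    ext (_ | ⟨v, j, i⟩)
    · simp [sigmaZ_apply_none, hnone]
    · simp [sigmaZ_apply_some, hx]

end

def lamZeroCoeff {P : Type} (f : P → ℕ) {m : ℕ} (v : P) (i : Fin m) : ℕ :=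
  if Odd ((i : ℕ) + 1) then (f v + 1) / 2 else f v / 2

theorem choose_lamZeroCoeff {P : Type} (f : P → ℕ) {m : ℕ} (v : P) (i : Fin m) :
    (f v).choose (lamZeroCoeff f v i) = (f v).choose (f v / 2) := by
  unfold lamZeroCoeff
  split_ifs
  · exact Nat.choose_add_one_div_two _
  · rfl

section

variable {P : Type} [Fintype P] {f : P → ℕ} [∀ v, NeZero (f v)] {m : ℕ}

theorem lamZeroZ_none : lamZeroZ P f m none = 1 := by
  simp [lamZeroZ]

theorem orbitSum_lamZeroZ (v : P) (i : Fin m) :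
    orbitSum v i (lamZeroZ P f m) = -(lamZeroCoeff f v i : ℤ) := by
  classical
  have hω : orbitSum v i (Finsupp.single none 1 : XZ P f m) = 0 := by simp [orbitSum_apply]
  simp [lamZeroZ, orbitSum_single_zero, hω, ite_and, lamZeroCoeff, sum_add_distrib,
    ← Nat.not_odd_iff_even]
  split_ifs <;> simp

noncomputable def weylOrbitElem (s : ∀ p : P × Fin m, Finset (ZMod (f p.1))) : XZ P f m :=
  Finsupp.equivFunOnFinite.symm fun
    | none => 1
    | some ⟨v, (j, i)⟩ => if j ∈ s (v, i) then -1 else 0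

@[simp]
theorem weylOrbitElem_none (s : ∀ p : P × Fin m, Finset (ZMod (f p.1))) :
    weylOrbitElem s none = 1 :=
  rfl

@[simp]
theorem weylOrbitElem_some (s : ∀ p : P × Fin m, Finset (ZMod (f p.1))) (v : P) (j : ZMod (f v))
    (i : Fin m) : weylOrbitElem s (some ⟨v, (j, i)⟩) = if j ∈ s (v, i) then -1 else 0 :=
  rfl

theorem weylOrbitElem_injective :
    Function.Injective (weylOrbitElem (P := P) (f := f) (m := m)) := by
  intro s t h
  ext ⟨v, i⟩ j
  have := DFunLike.congr_fun h (some ⟨v, (j, i)⟩)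
  simp only [weylOrbitElem_some] at this
  split_ifs at this <;> simp_all

theorem range_weylOrbitElem :
    Set.range (weylOrbitElem (P := P) (f := f) (m := m)) = weylOrbit P f m := by
  ext x
  constructor
  · rintro ⟨s, rfl⟩
    refine ⟨rfl, fun ⟨v, j, i⟩ => ?_⟩
    simp only [weylOrbitElem_some]
    split_ifs <;> simp
  · rintro ⟨hnone, hsome⟩
    refine ⟨fun p => {j | x (some ⟨p.1, (j, p.2)⟩) = -1}, ?_⟩
    ext (_ | ⟨v, j, i⟩)
    · simp [hnone]
    · rcases hsome ⟨v, j, i⟩ with h | h <;> simp [h]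

theorem orbitSum_weylOrbitElem (s : ∀ p : P × Fin m, Finset (ZMod (f p.1))) (v : P) (i : Fin m) :
    orbitSum v i (weylOrbitElem s) = -(s (v, i)).card := by
  simp [orbitSum_apply]

theorem weylOrbitElem_sub_lamZeroZ_mem_range_iff (s : ∀ p : P × Fin m, Finset (ZMod (f p.1))) :
    weylOrbitElem s - lamZeroZ P f m ∈ LinearMap.range (1 - sigmaZ P f m) ↔
      ∀ p, (s p).card = lamZeroCoeff f p.1 p.2 := by
  rw [mem_range_one_sub_sigmaZ_iff]
  simp [lamZeroZ_none, orbitSum_weylOrbitElem, orbitSum_lamZeroZ, neg_add_eq_zero]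

theorem setOf_congruent_eq_image_weylOrbitElem [DecidableEq P] :
    {lam : XZ P f m | lam ∈ weylOrbit P f m ∧
        lam - lamZeroZ P f m ∈ LinearMap.range (1 - sigmaZ P f m)} =
      weylOrbitElem '' ↑(Fintype.piFinset fun p : P × Fin m =>
        powersetCard (lamZeroCoeff f p.1 p.2) (univ : Finset (ZMod (f p.1)))) := by
  ext lam
  simp only [Set.mem_ofPred_eq, ← range_weylOrbitElem, Set.mem_image, mem_coe, Fintype.mem_piFinset,
    mem_powersetCard, subset_univ, true_and, ← weylOrbitElem_sub_lamZeroZ_mem_range_iff]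
  constructor
  · rintro ⟨⟨s, rfl⟩, hs⟩
    exact ⟨s, hs, rfl⟩
  · rintro ⟨s, hs, rfl⟩
    exact ⟨⟨s, rfl⟩, hs⟩

end

theorem card_weylOrbit_congruent_general (P : Type) [Fintype P]
    (f : P → ℕ) [∀ v, NeZero (f v)] (m : ℕ) :
    Set.ncard {lam : XZ P f m | lam ∈ weylOrbit P f m ∧
        lam - lamZeroZ P f m ∈
          LinearMap.range ((1 : Module.End ℤ (XZ P f m)) - sigmaZ P f m)} =
      ∏ v : P, ((f v).choose (f v / 2)) ^ m := by
  classical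
  rw [setOf_congruent_eq_image_weylOrbitElem,
    Set.ncard_image_of_injective _ weylOrbitElem_injective, Set.ncard_coe_finset,
    Fintype.card_piFinset, Fintype.prod_prod_type]
  simp only [card_powersetCard, card_univ, ZMod.card, choose_lamZeroCoeff, prod_const,
    Fintype.card_fin]

/-- the number of elements `λ` of the Weyl orbit of `ω` with
`λ − λ₀ ∈ (1 − σ)X` equals `∏_v (f_v choose ⌊f_v/2⌋)^m`. -/
theorem card_weylOrbit_congruent (P : Type) [Fintype P] [Nonempty P]
    (f : P → ℕ) [∀ v, NeZero (f v)] (m : ℕ) (hm : 1 ≤ m) :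
    Set.ncard {lam : XZ P f m | lam ∈ weylOrbit P f m ∧
        lam - lamZeroZ P f m ∈
          LinearMap.range ((1 : Module.End ℤ (XZ P f m)) - sigmaZ P f m)} =
      ∏ v : P, ((f v).choose (f v / 2)) ^ m :=
  card_weylOrbit_congruent_general P f m
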